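/- Let Π be a partially half-duplex protocol solving the strong multiplexor composition KW_f ⊛ MUX_n for some non-constant f:{0,1}^m→{0,1} and n∈ℕ, and let π₁ be a transcript of Π such that V_{π₁}≠∅ and χ(G_{π₁}) ≥ 4. Then the depth of Π is at least |π₁| + log₂ log₂ χ(G_{π₁}) − log₂ log₂ log₂ χ(G_{π₁}) − 4. -/

import Mathlib

/-! ### Basic objects: Boolean functions, matrices, compositions -/

/-- Boolean functions on `n`-bit strings. -/
abbrev BFunc (n : ℕ) : Type := (Fin n → Bool) → Bool

/-- Boolean `m × n` matrices, viewed as tuples of rows. -/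
abbrev BMat (m n : ℕ) : Type := Fin m → Fin n → Bool

/-- The column vector obtained by applying `g` to every row of `X`. -/
def gRows {m n : ℕ} (g : BFunc n) (X : BMat m n) : Fin m → Bool := fun i => g (X i)

/-- The composition `f ⋄ g` applied to a matrix `X`. -/
def compFG {m n : ℕ} (f : BFunc m) (g : BFunc n) (X : BMat m n) : Bool := f (gRows g X)

/-- A Boolean function is non-constant. -/
def NonConst {k : ℕ} (f : BFunc k) : Prop := (∃ x, f x = true) ∧ (∃ x, f x = false)

/-- A Boolean function on `n` bits is balanced if it has exactly `2^(n-1)` ones. -/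
def IsBalanced {n : ℕ} (g : BFunc n) : Prop := {x | g x = true}.ncard = 2 ^ (n - 1)

/-- The set `V₀` of balanced functions. -/
def BalancedFuncs (n : ℕ) : Set (BFunc n) := {g | IsBalanced g}

/-- The set of matrices `X` with `g(X) = a`. -/
def ginv {m n : ℕ} (g : BFunc n) (a : Fin m → Bool) : Set (BMat m n) := {X | gRows g X = a}

/-! ### De Morgan formulas and formula complexity -/

/-- De Morgan formulas over `m` variables: leaves are literals, gates are AND/OR. -/
inductive DMF (m : ℕ) : Type where
  | lit (i : Fin m) (pos : Bool)
  | and (l r : DMF m)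
  | or (l r : DMF m)

namespace DMF

/-- Size of a formula: its number of leaves. -/
def size {m : ℕ} : DMF m → ℕ
  | lit _ _ => 1
  | and l r => l.size + r.size
  | or l r => l.size + r.size

/-- Evaluation of a formula. -/
def eval {m : ℕ} : DMF m → (Fin m → Bool) → Bool
  | lit i pos, x => if pos then x i else !(x i)
  | and l r, x => l.eval x && r.eval x
  | or l r, x => l.eval x || r.eval x

end DMF

/-- `L(f)`: the minimal size of a de Morgan formula computing `f`. -/
noncomputable def Lfun {m : ℕ} (f : BFunc m) : ℕ :=
  sInf {s | ∃ φ : DMF m, φ.size = s ∧ ∀ x, φ.eval x = f x}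

/-- `L(A × B)`: the minimal size of a de Morgan formula separating `A` from `B`
(`0` if `A` or `B` is empty). -/
noncomputable def Lrect {m : ℕ} (A B : Set (Fin m → Bool)) : ℕ :=
  open Classical in
  if A.Nonempty ∧ B.Nonempty then
    sInf {s | ∃ φ : DMF m, φ.size = s ∧
      (∀ a ∈ A, φ.eval a = true) ∧ (∀ b ∈ B, φ.eval b = false)}
  else 0

/-! ### Deterministic communication protocols -/

/-- A deterministic communication protocol tree: at each internal vertex the
indicated player sends a bit determined by her input. -/
inductive Prot (X Y O : Type) : Type where
  | leaf (o : O)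
  | alice (s : X → Bool) (c : Bool → Prot X Y O)
  | bob (s : Y → Bool) (c : Bool → Prot X Y O)

namespace Prot

variable {X Y O : Type}

/-- Depth of a protocol tree. -/
def depth : Prot X Y O → ℕ
  | leaf _ => 0
  | alice _ c => 1 + max (c false).depth (c true).depth
  | bob _ c => 1 + max (c false).depth (c true).depth

/-- Running a protocol on a pair of inputs. -/
def run : Prot X Y O → X → Y → O
  | leaf o, _, _ => o
  | alice s c, x, y => (c (s x)).run x y
  | bob s c, x, y => (c (s y)).run x y

/-- A protocol solves a relation if on every input pair it outputs a valid solution. -/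
def Solves (p : Prot X Y O) (R : X → Y → O → Prop) : Prop :=
  ∀ x y, R x y (p.run x y)

/-- Alice's input `x` is consistent with the transcript `tr`. -/
def ConsA : Prot X Y O → List Bool → X → Prop
  | _, [], _ => True
  | leaf _, _ :: _, _ => False
  | alice s c, b :: tr, x => s x = b ∧ ConsA (c b) tr x
  | bob _ c, b :: tr, x => ConsA (c b) tr x

/-- Bob's input `y` is consistent with the transcript `tr`. -/
def ConsB : Prot X Y O → List Bool → Y → Prop
  | _, [], _ => True
  | leaf _, _ :: _, _ => False
  | alice _ c, b :: tr, y => ConsB (c b) tr y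
  | bob s c, b :: tr, y => s y = b ∧ ConsB (c b) tr y

/-- `tr` is a (possibly partial) transcript of `p`: each player has a consistent input. -/
def IsTranscript (p : Prot X Y O) (tr : List Bool) : Prop :=
  (∃ x, ConsA p tr x) ∧ (∃ y, ConsB p tr y)

end Prot

/-- `C(R)`: the deterministic communication complexity of a relation. -/
noncomputable def CC {X Y O : Type} (R : X → Y → O → Prop) : ℕ :=
  sInf {d | ∃ p : Prot X Y O, p.Solves R ∧ p.depth = d}

/-! ### Karchmer–Wigderson compositions and multiplexor compositions -/

/-- The relation `KW_f ⋄ KW_g`. -/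
def KWdiam {m n : ℕ} (f : BFunc m) (g : BFunc n) :
    {X : BMat m n // compFG f g X = true} → {Y : BMat m n // compFG f g Y = false} →
      Fin m × Fin n → Prop :=
  fun X Y o => X.1 o.1 o.2 ≠ Y.1 o.1 o.2

/-- The strong composition `KW_f ⊛ KW_g`. -/
def KWstrong {m n : ℕ} (f : BFunc m) (g : BFunc n) :
    {X : BMat m n // compFG f g X = true} → {Y : BMat m n // compFG f g Y = false} →
      Fin m × Fin n → Prop :=
  fun X Y o => X.1 o.1 o.2 ≠ Y.1 o.1 o.2 ∧ g (X.1 o.1) ≠ g (Y.1 o.1)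

/-- Alice's inputs in the multiplexor compositions: a function `g` and a matrix `X`
with `(f ⋄ g)(X) = 1`. -/
def AliceMux (m n : ℕ) (f : BFunc m) : Type :=
  {p : BFunc n × BMat m n // compFG f p.1 p.2 = true}

/-- Bob's inputs in the multiplexor compositions. -/
def BobMux (m n : ℕ) (f : BFunc m) : Type :=
  {p : BFunc n × BMat m n // compFG f p.1 p.2 = false}

/-- The relation `KW_f ⋄ MUX_n` (output `none` plays the role of `⊥`). -/
def MuxDiam {m n : ℕ} (f : BFunc m) :
    AliceMux m n f → BobMux m n f → Option (Fin m × Fin n) → Prop :=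
  fun x y o =>
    match o with
    | none => x.1.1 ≠ y.1.1
    | some (i, j) => x.1.2 i j ≠ y.1.2 i j

/-- The strong multiplexor composition `KW_f ⊛ MUX_n`. -/
def MuxStrong {m n : ℕ} (f : BFunc m) :
    AliceMux m n f → BobMux m n f → Option (Fin m × Fin n) → Prop :=
  fun x y o =>
    match o with
    | none => x.1.1 ≠ y.1.1
    | some (i, j) => x.1.2 i j ≠ y.1.2 i j ∧ x.1.1 (x.1.2 i) ≠ y.1.1 (y.1.2 i)

/-- The function part of Alice's multiplexor input. -/
def muxGA {m n : ℕ} {f : BFunc m} (x : AliceMux m n f) : BFunc n := x.1.1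

/-- The function part of Bob's multiplexor input. -/
def muxGB {m n : ℕ} {f : BFunc m} (y : BobMux m n f) : BFunc n := y.1.1

/-! ### Half-duplex protocols with adversary -/

/-- One player's tree in a half-duplex protocol: at each internal vertex, the
player's input determines whether she sends a bit (`some b`) or receives (`none`);
the four children are indexed by (isSend, bit). -/
inductive HDTree (X O : Type) : Type where
  | leaf (o : O)
  | node (act : X → Option Bool) (child : Bool → Bool → HDTree X O)

namespace HDTree

variable {X O : Type}

/-- The tree is full of depth `d`: every leaf is at distance exactly `d` from the root. -/
inductive IsFull : HDTree X O → ℕ → Prop where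
  | leaf (o : O) : IsFull (leaf o) 0
  | node {act : X → Option Bool} {child : Bool → Bool → HDTree X O} {d : ℕ}
      (h : ∀ s b, IsFull (child s b) d) : IsFull (node act child) (d + 1)

/-- The input `x` is consistent with the transcript `tr`: there is a vertex at
depth `|tr|` reachable on `x` along edges labeled `send(trᵢ)` or `receive(trᵢ)`. -/
def Cons : HDTree X O → List Bool → X → Prop
  | _, [], _ => True
  | leaf _, _ :: _, _ => False
  | node act child, b :: tr, x =>
      match act x with
      | some c => c = b ∧ Cons (child true b) tr x
      | none => Cons (child false b) tr x

end HDTree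

/-- One round of a half-duplex execution; `ab` are the bits delivered by the
adversary in case the round is silent. -/
def hdStep {X Y O : Type} (tA : HDTree X O) (tB : HDTree Y O) (x : X) (y : Y)
    (ab : Bool × Bool) : HDTree X O × HDTree Y O :=
  match tA, tB with
  | HDTree.node actA chA, HDTree.node actB chB =>
      ⟨match actA x with
        | some b => chA true b
        | none => chA false ((actB y).getD ab.1),
       match actB y with
        | some b => chB true b
        | none => chB false ((actA x).getD ab.2)⟩
  | tA, tB => (tA, tB)

/-- Running a half-duplex execution for `d` rounds against the adversary `adv`. -/
def hdRun {X Y O : Type} :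
    ℕ → (ℕ → Bool × Bool) → HDTree X O → HDTree Y O → X → Y → HDTree X O × HDTree Y O
  | 0, _, tA, tB, _, _ => (tA, tB)
  | d + 1, adv, tA, tB, x, y =>
      hdRun d (fun i => adv (i + 1)) (hdStep tA tB x y (adv 0)).1 (hdStep tA tB x y (adv 0)).2 x y

/-- The current round is classical: exactly one of the players sends. -/
def ClassicalRound {X Y O : Type} (tA : HDTree X O) (tB : HDTree Y O) (x : X) (y : Y) : Prop :=
  match tA, tB with
  | HDTree.node actA _, HDTree.node actB _ => (actA x).isSome ≠ (actB y).isSome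
  | _, _ => True

/-- All rounds of the `d`-round execution on `(x, y)` against `adv` are classical. -/
def AllClassical {X Y O : Type} :
    ℕ → (ℕ → Bool × Bool) → HDTree X O → HDTree Y O → X → Y → Prop
  | 0, _, _, _, _, _ => True
  | d + 1, adv, tA, tB, x, y =>
      ClassicalRound tA tB x y ∧
        AllClassical d (fun i => adv (i + 1)) (hdStep tA tB x y (adv 0)).1
          (hdStep tA tB x y (adv 0)).2 x y

/-- A half-duplex protocol of depth `d`: a pair of full 4-ary trees of depth `d`. -/
structure HDProt (X Y O : Type) (d : ℕ) where
  alice : HDTree X O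
  bob : HDTree Y O
  fullA : alice.IsFull d
  fullB : bob.IsFull d

namespace HDProt

variable {X Y O : Type} {d : ℕ}

/-- The protocol solves the relation `R`: in every execution against every adversary,
both players reach leaves labeled with a common output that is valid for the inputs. -/
def Solves (P : HDProt X Y O d) (R : X → Y → O → Prop) : Prop :=
  ∀ x y adv, ∃ o : O,
    (hdRun d adv P.alice P.bob x y).1 = HDTree.leaf o ∧
    (hdRun d adv P.alice P.bob x y).2 = HDTree.leaf o ∧ R x y o

/-- The protocol is partially half-duplex with respect to the function parts
`gA`, `gB` of the inputs: when `gA x = gB y`, all rounds are classical. -/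
def PartiallyHD {G : Type} (P : HDProt X Y O d) (gA : X → G) (gB : Y → G) : Prop :=
  ∀ x y adv, gA x = gB y → AllClassical d adv P.alice P.bob x y

/-- `tr` is a (possibly partial) transcript of `P`. -/
def IsTranscript (P : HDProt X Y O d) (tr : List Bool) : Prop :=
  (∃ x, P.alice.Cons tr x) ∧ (∃ y, P.bob.Cons tr y)

end HDProt

/-- Partially half-duplex communication complexity of a relation whose inputs carry
function parts `gA`, `gB`. -/
noncomputable def Cphd {X Y O G : Type} (R : X → Y → O → Prop)
    (gA : X → G) (gB : Y → G) : ℕ :=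
  sInf {d | ∃ P : HDProt X Y O d, P.Solves R ∧ P.PartiallyHD gA gB}

/-! ### Transcript sets for multiplexor protocols (half-duplex version) -/

section MuxSetsHD

variable {m n : ℕ} {f : BFunc m} {O : Type} {d : ℕ}

/-- `X_π(g)`: the matrices `X` such that Alice's input `(g, X)` is consistent with `tr`. -/
def XpiHD (P : HDProt (AliceMux m n f) (BobMux m n f) O d) (tr : List Bool)
    (g : BFunc n) : Set (BMat m n) :=
  {X | ∃ h : compFG f g X = true, P.alice.Cons tr ⟨(g, X), h⟩}

/-- `Y_π(g)`: the matrices `Y` such that Bob's input `(g, Y)` is consistent with `tr`. -/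
def YpiHD (P : HDProt (AliceMux m n f) (BobMux m n f) O d) (tr : List Bool)
    (g : BFunc n) : Set (BMat m n) :=
  {Y | ∃ h : compFG f g Y = false, P.bob.Cons tr ⟨(g, Y), h⟩}

/-- `A_π(g)`: the strings `a ∈ f⁻¹(1)` with `X_π(g, a) ≠ ∅`. -/
def ApiHD (P : HDProt (AliceMux m n f) (BobMux m n f) O d) (tr : List Bool)
    (g : BFunc n) : Set (Fin m → Bool) :=
  {a | f a = true ∧ (XpiHD P tr g ∩ ginv g a).Nonempty}

/-- `B_π(g)`: the strings `b ∈ f⁻¹(0)` with `Y_π(g, b) ≠ ∅`. -/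
def BpiHD (P : HDProt (AliceMux m n f) (BobMux m n f) O d) (tr : List Bool)
    (g : BFunc n) : Set (Fin m → Bool) :=
  {b | f b = false ∧ (YpiHD P tr g ∩ ginv g b).Nonempty}

/-- `V_π` (version via nonempty `X_π(g)` and `Y_π(g)`). -/
def VpiHD (P : HDProt (AliceMux m n f) (BobMux m n f) O d) (tr : List Bool) :
    Set (BFunc n) :=
  {g | (XpiHD P tr g).Nonempty ∧ (YpiHD P tr g).Nonempty}

/-- `V_π` (version via nonempty `A_π(g)` and `B_π(g)`). -/
def VpiABHD (P : HDProt (AliceMux m n f) (BobMux m n f) O d) (tr : List Bool) :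
    Set (BFunc n) :=
  {g | (ApiHD P tr g).Nonempty ∧ (BpiHD P tr g).Nonempty}

/-- A transcript `tr` of `P` is `γ`-alive (with the universal constant `κ = 8`). -/
def AliveHD (γ : ℝ) (P : HDProt (AliceMux m n f) (BobMux m n f) O d)
    (tr : List Bool) : Prop :=
  P.IsTranscript tr ∧
  ∃ V : Set (BFunc n), V ⊆ VpiABHD P tr ∧ (∀ g ∈ V, IsBalanced g) ∧
    ((2 : ℝ) ^ (-(m : ℝ)) * ((BalancedFuncs n).ncard : ℝ) ≤ (V.ncard : ℝ)) ∧
    (∀ g ∈ V,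
      (1 - γ) * m + 8 * Real.logb 2 m + 8 ≤
        Real.logb 2 (Lrect (ApiHD P tr g) (BpiHD P tr g))) ∧
    (∀ g ∈ V, ∀ a ∈ ApiHD P tr g,
      (2 : ℝ) ^ (-γ * m + 1) * ((ginv g a).ncard : ℝ) ≤
        ((XpiHD P tr g ∩ ginv g a).ncard : ℝ)) ∧
    (∀ g ∈ V, ∀ b ∈ BpiHD P tr g,
      (2 : ℝ) ^ (-γ * m + 1) * ((ginv g b).ncard : ℝ) ≤
        ((YpiHD P tr g ∩ ginv g b).ncard : ℝ))

/-- The weak intersection property for two functions `gA`, `gB`. -/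
def WeakIntersectHD (P : HDProt (AliceMux m n f) (BobMux m n f) O d) (tr : List Bool)
    (gA gB : BFunc n) : Prop :=
  ∃ X ∈ XpiHD P tr gA, ∃ Y ∈ YpiHD P tr gB,
    ∀ i : Fin m, gA (X i) ≠ gB (Y i) → X i = Y i

/-- The characteristic graph of `tr` for `KW_f ⋄ MUX_n`, on vertex set `V`. -/
def charGraphDiamHD (P : HDProt (AliceMux m n f) (BobMux m n f) O d) (tr : List Bool)
    (V : Set (BFunc n)) : SimpleGraph ↥V where
  Adj gA gB := gA ≠ gB ∧
    ((XpiHD P tr ↑gA ∩ YpiHD P tr ↑gB).Nonempty ∨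
      (XpiHD P tr ↑gB ∩ YpiHD P tr ↑gA).Nonempty)
  symm := by
    constructor
    rintro a b ⟨hne, h⟩
    exact ⟨hne.symm, h.symm⟩
  loopless := by
    constructor
    rintro a ⟨hne, -⟩
    exact hne rfl

/-- The characteristic graph of `tr` for `KW_f ⊛ MUX_n`, on vertex set `V`. -/
def charGraphStrongHD (P : HDProt (AliceMux m n f) (BobMux m n f) O d) (tr : List Bool)
    (V : Set (BFunc n)) : SimpleGraph ↥V where
  Adj gA gB := gA ≠ gB ∧
    (WeakIntersectHD P tr ↑gA ↑gB ∨ WeakIntersectHD P tr ↑gB ↑gA)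
  symm := by
    constructor
    rintro a b ⟨hne, h⟩
    exact ⟨hne.symm, h.symm⟩
  loopless := by
    constructor
    rintro a ⟨hne, -⟩
    exact hne rfl

end MuxSetsHD

/-! ### Transcript sets for multiplexor protocols (standard deterministic version) -/

section MuxSetsP

variable {m n : ℕ} {f : BFunc m} {O : Type}

/-- `X_π(g)` for a standard deterministic protocol. -/
def XpiP (p : Prot (AliceMux m n f) (BobMux m n f) O) (tr : List Bool)
    (g : BFunc n) : Set (BMat m n) :=
  {X | ∃ h : compFG f g X = true, Prot.ConsA p tr ⟨(g, X), h⟩}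

/-- `Y_π(g)` for a standard deterministic protocol. -/
def YpiP (p : Prot (AliceMux m n f) (BobMux m n f) O) (tr : List Bool)
    (g : BFunc n) : Set (BMat m n) :=
  {Y | ∃ h : compFG f g Y = false, Prot.ConsB p tr ⟨(g, Y), h⟩}

/-- `A_π(g)` for a standard deterministic protocol. -/
def ApiP (p : Prot (AliceMux m n f) (BobMux m n f) O) (tr : List Bool)
    (g : BFunc n) : Set (Fin m → Bool) :=
  {a | f a = true ∧ (XpiP p tr g ∩ ginv g a).Nonempty}

/-- `B_π(g)` for a standard deterministic protocol. -/
def BpiP (p : Prot (AliceMux m n f) (BobMux m n f) O) (tr : List Bool)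
    (g : BFunc n) : Set (Fin m → Bool) :=
  {b | f b = false ∧ (YpiP p tr g ∩ ginv g b).Nonempty}

/-- `V_π` (version via nonempty `X_π(g)` and `Y_π(g)`), standard protocols. -/
def VpiPset (p : Prot (AliceMux m n f) (BobMux m n f) O) (tr : List Bool) :
    Set (BFunc n) :=
  {g | (XpiP p tr g).Nonempty ∧ (YpiP p tr g).Nonempty}

/-- `V_π` (version via nonempty `A_π(g)` and `B_π(g)`), standard protocols. -/
def VpiABP (p : Prot (AliceMux m n f) (BobMux m n f) O) (tr : List Bool) :
    Set (BFunc n) :=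
  {g | (ApiP p tr g).Nonempty ∧ (BpiP p tr g).Nonempty}

/-- `γ`-alive transcripts (with `κ = 8`), standard protocols. -/
def AliveP (γ : ℝ) (p : Prot (AliceMux m n f) (BobMux m n f) O)
    (tr : List Bool) : Prop :=
  p.IsTranscript tr ∧
  ∃ V : Set (BFunc n), V ⊆ VpiABP p tr ∧ (∀ g ∈ V, IsBalanced g) ∧
    ((2 : ℝ) ^ (-(m : ℝ)) * ((BalancedFuncs n).ncard : ℝ) ≤ (V.ncard : ℝ)) ∧
    (∀ g ∈ V,
      (1 - γ) * m + 8 * Real.logb 2 m + 8 ≤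
        Real.logb 2 (Lrect (ApiP p tr g) (BpiP p tr g))) ∧
    (∀ g ∈ V, ∀ a ∈ ApiP p tr g,
      (2 : ℝ) ^ (-γ * m + 1) * ((ginv g a).ncard : ℝ) ≤
        ((XpiP p tr g ∩ ginv g a).ncard : ℝ)) ∧
    (∀ g ∈ V, ∀ b ∈ BpiP p tr g,
      (2 : ℝ) ^ (-γ * m + 1) * ((ginv g b).ncard : ℝ) ≤
        ((YpiP p tr g ∩ ginv g b).ncard : ℝ))

/-- The weak intersection property, standard protocols. -/
def WeakIntersectP (p : Prot (AliceMux m n f) (BobMux m n f) O) (tr : List Bool)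
    (gA gB : BFunc n) : Prop :=
  ∃ X ∈ XpiP p tr gA, ∃ Y ∈ YpiP p tr gB,
    ∀ i : Fin m, gA (X i) ≠ gB (Y i) → X i = Y i

/-- The characteristic graph for `KW_f ⋄ MUX_n`, standard protocols. -/
def charGraphDiamP (p : Prot (AliceMux m n f) (BobMux m n f) O) (tr : List Bool)
    (V : Set (BFunc n)) : SimpleGraph ↥V where
  Adj gA gB := gA ≠ gB ∧
    ((XpiP p tr ↑gA ∩ YpiP p tr ↑gB).Nonempty ∨
      (XpiP p tr ↑gB ∩ YpiP p tr ↑gA).Nonempty)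
  symm := by
    constructor
    rintro a b ⟨hne, h⟩
    exact ⟨hne.symm, h.symm⟩
  loopless := by
    constructor
    rintro a ⟨hne, -⟩
    exact hne rfl

/-- The characteristic graph for `KW_f ⊛ MUX_n`, standard protocols. -/
def charGraphStrongP (p : Prot (AliceMux m n f) (BobMux m n f) O) (tr : List Bool)
    (V : Set (BFunc n)) : SimpleGraph ↥V where
  Adj gA gB := gA ≠ gB ∧
    (WeakIntersectP p tr ↑gA ↑gB ∨ WeakIntersectP p tr ↑gB ↑gA)
  symm := by
    constructor
    rintro a b ⟨hne, h⟩
    exact ⟨hne.symm, h.symm⟩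
  loopless := by
    constructor
    rintro a ⟨hne, -⟩
    exact hne rfl

end MuxSetsP

/-! ### Prefix-thick sets, branching structures and winning sets -/

/-- A set of strings indexed by a linearly ordered set `I` is prefix thick with
degree `t`: it has a nonempty subset whose prefix tree has minimum degree
greater than `t` (the children of the depth-`i` vertex given by the prefix of
`x ∈ S'` are the possible values of the next coordinate among elements of `S'`
agreeing with `x` on all earlier coordinates). -/
def RowThick {I A : Type} [LT I] (S : Set (I → A)) (t : ℝ) : Prop :=
  ∃ S' : Set (I → A), S' ⊆ S ∧ S'.Nonempty ∧ ∀ x ∈ S', ∀ i : I,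
    t < (({a : A | ∃ y ∈ S', (∀ j, j < i → y j = x j) ∧ y i = a}).ncard : ℝ)

/-- Prefix thickness for strings over (possibly different) alphabets `A i`,
with a separate degree bound `t i` at each depth. -/
def DepThick {m : ℕ} {A : Fin m → Type} (S : Set (∀ i, A i)) (t : Fin m → ℝ) : Prop :=
  ∃ S' : Set (∀ i, A i), S' ⊆ S ∧ S'.Nonempty ∧ ∀ x ∈ S', ∀ i : Fin m,
    t i < (({a : A i | ∃ y ∈ S', (∀ j, j < i → y j = x j) ∧ y i = a}).ncard : ℝ)

/-- The restriction of a set of matrices to the rows in `I` (ordered as in `[m]`). -/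
def restrictRows {m n : ℕ} (I : Finset (Fin m)) (S : Set (BMat m n)) :
    Set (↥I → (Fin n → Bool)) :=
  (fun X => fun i : ↥I => X i.1) '' S

/-- The restriction of a set of strings to the coordinates in `I` (ordered as in `[m]`). -/
def restrictStr {m : ℕ} {A : Type} (I : Finset (Fin m)) (S : Set (Fin m → A)) :
    Set (↥I → A) :=
  (fun x => fun i : ↥I => x i.1) '' S

/-- `w` is a branching structure of `S`: some nonempty subset `S' ⊆ S` has a prefix
tree in which every vertex at depth `i` has exactly `w i` children. -/
def IsBranching {m : ℕ} {A : Type} (S : Set (Fin m → A)) (w : Fin m → ℕ) : Prop :=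
  ∃ S' : Set (Fin m → A), S' ⊆ S ∧ S'.Nonempty ∧ ∀ x ∈ S', ∀ i : Fin m,
    ({a : A | ∃ y ∈ S', (∀ j, j < i → y j = x j) ∧ y i = a}).ncard = w i

/-- The winning set of `S`: the set of its branching structures. -/
def WinSet {m : ℕ} {A : Type} (S : Set (Fin m → A)) : Set (Fin m → ℕ) :=
  {w | IsBranching S w}

/-! ### Non-deterministic communication complexity -/

/-- There is a non-deterministic protocol for the total function `f` with
witness set of size `k`. -/
def NDProtFor {X Y : Type} (f : X × Y → Bool) (k : ℕ) : Prop :=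
  ∃ a : X → Fin k → Bool, ∃ b : Y → Fin k → Bool,
    ∀ x y, f (x, y) = true ↔ ∃ w, a x w = true ∧ b y w = true

/-- The minimal size of a (nonempty) witness set of a non-deterministic protocol for `f`;
the non-deterministic communication complexity `NCC(f)` is its base-2 logarithm. -/
noncomputable def NCCcard {X Y : Type} (f : X × Y → Bool) : ℕ :=
  sInf {k | 1 ≤ k ∧ NDProtFor f k}

/-- A non-deterministic protocol for the partial problem `GraphIneq_G` with witness
set of size `k`: adjacent pairs are accepted, equal pairs are rejected. -/
def GraphIneqProt {V : Type} (G : SimpleGraph V) (k : ℕ) : Prop :=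
  ∃ a : V → Fin k → Bool, ∃ b : V → Fin k → Bool,
    (∀ u v, G.Adj u v → ∃ w, a u w = true ∧ b v w = true) ∧
    (∀ v, ¬ ∃ w, a v w = true ∧ b v w = true)

/-- The minimal witness-set size of a non-deterministic protocol for `GraphIneq_G`;
`NCC(GraphIneq_G)` is its base-2 logarithm. -/
noncomputable def NCCgraphIneqCard {V : Type} (G : SimpleGraph V) : ℕ :=
  sInf {k | 1 ≤ k ∧ GraphIneqProt G k}

/-- `S` is an independent set of `G`. -/
def IndepIn {V : Type} (G : SimpleGraph V) (S : Set V) : Prop :=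
  ∀ u ∈ S, ∀ v ∈ S, ¬ G.Adj u v

/-!
Let `D = d - |π₁|`. If `g_A, g_B` are adjacent in `G_{π₁}`, run the protocol on the matrices
witnessing the adjacency against the adversary that delivers `π₁` and then `false`. Either both
players follow a common continuation `γ` down to a common leaf, whose output must be `⊥` because
no entry is a valid answer, or after a common continuation `γ` both send, with different bits.
For `g_A = g_B` neither can happen: `⊥` is then a wrong answer, and every round is classical.
Hence the sets of such witnesses `(γ, outcome)` that Alice, resp. Bob, can produce on `g` form a
proper colouring with `2 ^ (2 · #witnesses) ≤ 2 ^ 2 ^ (D + 4)` colours, i.e. `log log χ ≤ D + 4`.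
-/

namespace HDTree

variable {X O : Type}

def follow : HDTree X O → X → List Bool → HDTree X O
  | t, _, [] => t
  | leaf o, _, _ :: _ => leaf o
  | node act child, x, b :: p => follow (child (act x).isSome b) x p

def rootAct : HDTree X O → X → Option Bool
  | leaf _, _ => none
  | node act _, x => act x

theorem cons_append : ∀ (t : HDTree X O) (x : X) (p q : List Bool),
    t.Cons (p ++ q) x ↔ t.Cons p x ∧ (t.follow x p).Cons q x
  | _, _, [], _ => by simp [Cons, follow]
  | leaf _, _, _ :: _, _ => by simp [Cons]
  | node act child, x, b :: p, q => by
    cases hax : act x <;> simp [Cons, follow, hax, cons_append _ x p q, and_assoc]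

theorem follow_append : ∀ (t : HDTree X O) (x : X) (p q : List Bool),
    t.follow x (p ++ q) = (t.follow x p).follow x q
  | _, _, [], _ => by simp [follow]
  | leaf _, _, _ :: _, q => by cases q <;> simp [follow]
  | node _ _, x, _ :: p, q => follow_append _ x p q

theorem IsFull.length_le_of_cons {t : HDTree X O} {e : ℕ} (ht : t.IsFull e) {x : X} :
    ∀ {p : List Bool}, t.Cons p x → p.length ≤ e
  | [], _ => Nat.zero_le _
  | b :: p, h => by
    cases ht with
    | leaf => simp [Cons] at h
    | @node act child e hch =>
      have hp : (child (act x).isSome b).Cons p x := by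
        cases hax : act x <;> simp_all [Cons]
      simpa using (hch _ b).length_le_of_cons hp

theorem IsFull.follow {x : X} : ∀ {t : HDTree X O} {p : List Bool} {e : ℕ},
    t.IsFull (p.length + e) → (t.follow x p).IsFull e
  | _, [], _, h => by simpa [HDTree.follow] using h
  | t, b :: p, e, h => by
    rw [List.length_cons, Nat.add_right_comm] at h
    cases h with
    | node hch => exact (hch _ b).follow

end HDTree

section Execution

open HDTree

variable {X Y O : Type}

/-- The adversary that delivers the bits of `p`, and then `false`, in silent rounds. -/
def listAdv (p : List Bool) : ℕ → Bool × Bool := fun i => (p.getD i false, p.getD i false)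

theorem hdRun_add : ∀ (a b : ℕ) (adv : ℕ → Bool × Bool) (tA : HDTree X O) (tB : HDTree Y O)
    (x : X) (y : Y), hdRun (a + b) adv tA tB x y =
      hdRun b (fun i => adv (i + a)) (hdRun a adv tA tB x y).1 (hdRun a adv tA tB x y).2 x y
  | 0, _, _, _, _, _, _ => by simp [hdRun]
  | a + 1, b, adv, tA, tB, x, y => by
    rw [Nat.add_right_comm]
    exact hdRun_add a b _ _ _ x y

theorem AllClassical.add : ∀ (a b : ℕ) (adv : ℕ → Bool × Bool) (tA : HDTree X O)
    (tB : HDTree Y O) (x : X) (y : Y), AllClassical (a + b) adv tA tB x y →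
      AllClassical b (fun i => adv (i + a)) (hdRun a adv tA tB x y).1
        (hdRun a adv tA tB x y).2 x y
  | 0, _, _, _, _, _, _, h => by simpa [hdRun] using h
  | a + 1, b, adv, tA, tB, x, y, h => by
    rw [Nat.add_right_comm] at h
    exact AllClassical.add a b _ _ _ x y h.2

theorem hdRun_leaf (k : ℕ) (adv : ℕ → Bool × Bool) (a b : O) (x : X) (y : Y) :
    hdRun k adv (leaf a) (leaf b) x y = (leaf a, leaf b) := by
  induction k generalizing adv with
  | zero => rfl
  | succ k ih => exact ih _

theorem hdStep_eq_follow {tA : HDTree X O} {tB : HDTree Y O} {x : X} {y : Y} {b : Bool}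
    {ab : Bool × Bool} (hA : tA.Cons [b] x) (hB : tB.Cons [b] y)
    (hab : tA.rootAct x = none → tB.rootAct y = none → ab = (b, b)) :
    hdStep tA tB x y ab = (tA.follow x [b], tB.follow y [b]) := by
  cases tA with
  | leaf => simp [Cons] at hA
  | node actA chA =>
    cases tB with
    | leaf => simp [Cons] at hB
    | node actB chB =>
      cases hax : actA x <;> cases hay : actB y <;> simp_all [Cons, hdStep, follow, rootAct]

theorem hdRun_listAdv_eq_follow : ∀ (p : List Bool) {tA : HDTree X O} {tB : HDTree Y O}
    {x : X} {y : Y}, tA.Cons p x → tB.Cons p y →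
      hdRun p.length (listAdv p) tA tB x y = (tA.follow x p, tB.follow y p)
  | [], _, _, _, _, _, _ => by simp [hdRun, follow]
  | b :: p, tA, tB, x, y, hA, hB => by
    rw [← List.singleton_append, cons_append] at hA hB
    have hstep := hdStep_eq_follow (ab := listAdv (b :: p) 0) hA.1 hB.1 (fun _ _ => rfl)
    show hdRun p.length (fun i => listAdv (b :: p) (i + 1)) _ _ x y = _
    rw [hstep, show (fun i => listAdv (b :: p) (i + 1)) = listAdv p from rfl,
      hdRun_listAdv_eq_follow p hA.2 hB.2, ← follow_append, ← follow_append]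
    rfl

theorem listAdv_shift (p : List Bool) :
    (fun i => listAdv p (i + p.length)) = fun _ => (false, false) := by
  funext i
  simp [listAdv]

theorem hdRun_listAdv {p : List Bool} {tA : HDTree X O} {tB : HDTree Y O} {x : X} {y : Y}
    (hA : tA.Cons p x) (hB : tB.Cons p y) (k : ℕ) :
    hdRun (p.length + k) (listAdv p) tA tB x y =
      hdRun k (fun _ => (false, false)) (tA.follow x p) (tB.follow y p) x y := by
  rw [hdRun_add, hdRun_listAdv_eq_follow p hA hB, listAdv_shift]

theorem AllClassical.of_listAdv {p : List Bool} {tA : HDTree X O} {tB : HDTree Y O} {x : X}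
    {y : Y} (hA : tA.Cons p x) (hB : tB.Cons p y) {k : ℕ}
    (h : AllClassical (p.length + k) (listAdv p) tA tB x y) :
    AllClassical k (fun _ => (false, false)) (tA.follow x p) (tB.follow y p) x y := by
  simpa [hdRun_listAdv_eq_follow p hA hB, listAdv_shift] using h.add

theorem AllClassical.not_both_send {e : ℕ} {adv : ℕ → Bool × Bool} {tA : HDTree X O}
    {tB : HDTree Y O} {x : X} {y : Y} (h : AllClassical e adv tA tB x y) (hfull : tA.IsFull e)
    {c c' : Bool} (hA : tA.rootAct x = some c) (hB : tB.rootAct y = some c') : False := by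
  cases hfull with
  | leaf => simp [rootAct] at hA
  | node =>
    cases tB with
    | leaf => simp [rootAct] at hB
    | node => simp_all [AllClassical, ClassicalRound, rootAct]

theorem exists_common_bit_or_clash {actA : X → Option Bool} {actB : Y → Option Bool}
    (chA : Bool → Bool → HDTree X O) (chB : Bool → Bool → HDTree Y O) (x : X) (y : Y) :
    (∃ c, actA x = some c ∧ actB y = some !c) ∨
      ∃ b, (node actA chA).Cons [b] x ∧ (node actB chB).Cons [b] y ∧
        (actA x = none → actB y = none → b = false) := by
  cases hax : actA x with
  | some c =>
    cases hay : actB y with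
    | some c' =>
      by_cases hc : c' = c
      · exact .inr ⟨c, by simp [Cons, hax], by simp [Cons, hay, hc], by simp⟩
      · exact .inl ⟨c, rfl, by cases c <;> cases c' <;> simp_all⟩
    | none => exact .inr ⟨c, by simp [Cons, hax], by simp [Cons, hay], by simp⟩
  | none =>
    cases hay : actB y with
    | some c' => exact .inr ⟨c', by simp [Cons, hax], by simp [Cons, hay], by simp⟩
    | none => exact .inr ⟨false, by simp [Cons, hax], by simp [Cons, hay], by simp⟩

theorem hdRun_false_dichotomy : ∀ (e : ℕ) {tA : HDTree X O} {tB : HDTree Y O} {x : X} {y : Y},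
    tA.IsFull e → tB.IsFull e →
    (∃ γ : List Bool, γ.length = e ∧ tA.Cons γ x ∧ tB.Cons γ y ∧
        hdRun e (fun _ => (false, false)) tA tB x y = (tA.follow x γ, tB.follow y γ)) ∨
    (∃ (γ : List Bool) (c : Bool), γ.length < e ∧ tA.Cons γ x ∧ tB.Cons γ y ∧
        (tA.follow x γ).rootAct x = some c ∧ (tB.follow y γ).rootAct y = some !c)
  | 0, _, _, _, _, _, _ =>
    .inl ⟨[], rfl, by simp [Cons], by simp [Cons], by simp [hdRun, follow]⟩
  | e + 1, _, _, x, y, .node hA, .node hB => by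
    rcases exists_common_bit_or_clash _ _ x y with ⟨c, hcA, hcB⟩ | ⟨b, hbA, hbB, hsilent⟩
    · exact .inr ⟨[], c, e.succ_pos, by simp [Cons], by simp [Cons],
        by simpa [follow, rootAct], by simpa [follow, rootAct]⟩
    have hstep := hdStep_eq_follow (ab := (false, false)) hbA hbB
      (fun h₁ h₂ => by simp [hsilent h₁ h₂])
    rcases hdRun_false_dichotomy e (hA _ b) (hB _ b) with
      ⟨γ, hlen, hγA, hγB, hrun⟩ | ⟨γ, c, hlen, hγA, hγB, hcA, hcB⟩
    · refine .inl ⟨b :: γ, by simp [hlen], ?_, ?_, ?_⟩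
      · exact (cons_append _ x [b] γ).2 ⟨hbA, by simpa [follow] using hγA⟩
      · exact (cons_append _ y [b] γ).2 ⟨hbB, by simpa [follow] using hγB⟩
      · show hdRun e _ _ _ x y = _
        rw [hstep]
        simpa [follow] using hrun
    · refine .inr ⟨b :: γ, c, by simp [hlen], ?_, ?_, by simpa [follow] using hcA,
        by simpa [follow] using hcB⟩
      · exact (cons_append _ x [b] γ).2 ⟨hbA, by simpa [follow] using hγA⟩
      · exact (cons_append _ y [b] γ).2 ⟨hbB, by simpa [follow] using hγB⟩

end Execution

theorem SimpleGraph.colorable_of_witnesses {V W : Type} [Fintype W] (G : SimpleGraph V)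
    (a b : V → W → Prop) (hadj : ∀ u v, G.Adj u v → ∃ w, a u w ∧ b v w ∨ a v w ∧ b u w)
    (hdiag : ∀ v w, ¬ (a v w ∧ b v w)) : G.Colorable (2 ^ (2 * Fintype.card W)) := by
  classical
  let col : V → (W → Bool) × (W → Bool) := fun v => (fun w => a v w, fun w => b v w)
  have hproper : ∀ {u v}, G.Adj u v → col u ≠ col v := by
    intro u v huv hcol
    simp only [col, Prod.mk.injEq, funext_iff, decide_eq_decide] at hcol
    obtain ⟨w, ⟨hau, hbv⟩ | ⟨hav, hbu⟩⟩ := hadj u v huv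
    · exact hdiag u w ⟨hau, (hcol.2 w).2 hbv⟩
    · exact hdiag u w ⟨(hcol.1 w).2 hav, hbu⟩
  convert (SimpleGraph.Coloring.mk col hproper).colorable
  simp [two_mul, pow_add]

section Witnesses

open HDTree

variable {m n : ℕ} {f : BFunc m}

/-- `Signals t x p none`: after following `p` on input `x` the player sits at the leaf `⊥`;
`Signals t x p (some c)`: she is about to send `c`. -/
def HDTree.Signals {Z α : Type} (t : HDTree Z (Option α)) (x : Z) (p : List Bool) :
    Option Bool → Prop
  | none => t.follow x p = leaf none
  | some c => (t.follow x p).rootAct x = some c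

/-- A witness is a continuation `γ` of the transcript of length at most `D`, together with
`none` (both players output `⊥` after `γ`) or `some c` (after `γ` Alice sends `c` while Bob
sends `!c`). -/
abbrev Wit (D : ℕ) : Type := (Σ k : Fin (D + 1), List.Vector Bool k) × Option Bool

def Wit.path {D : ℕ} (w : Wit D) : List Bool := w.1.2.toList

theorem two_mul_card_wit_le (D : ℕ) : 2 * Fintype.card (Wit D) ≤ 2 ^ (D + 4) := by
  have hsum : ∑ k : Fin (D + 1), Fintype.card (List.Vector Bool k) < 2 ^ (D + 1) := by
    simpa [Fin.sum_univ_eq_sum_range (2 ^ ·)] using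
      Nat.geomSum_lt le_rfl (s := Finset.range (D + 1)) (by simp)
  rw [Fintype.card_prod, Fintype.card_sigma, Fintype.card_option, Fintype.card_bool,
    show 2 ^ (D + 4) = 2 ^ (D + 1) * 8 by ring]
  omega

theorem MuxStrong.eq_none {x : AliceMux m n f} {y : BobMux m n f} {o : Option (Fin m × Fin n)}
    (hkey : ∀ i, x.1.1 (x.1.2 i) ≠ y.1.1 (y.1.2 i) → x.1.2 i = y.1.2 i)
    (h : MuxStrong f x y o) : o = none := by
  rcases o with _ | ⟨i, j⟩
  · rfl
  · exact absurd (congrFun (hkey i h.2) j) h.1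

variable {d : ℕ} (P : HDProt (AliceMux m n f) (BobMux m n f) (Option (Fin m × Fin n)) d)
  (tr : List Bool)

def WitAccA {D : ℕ} (g : BFunc n) (w : Wit D) : Prop :=
  ∃ x : AliceMux m n f, x.1.1 = g ∧ P.alice.Cons (tr ++ w.path) x ∧
    P.alice.Signals x (tr ++ w.path) w.2

def WitAccB {D : ℕ} (g : BFunc n) (w : Wit D) : Prop :=
  ∃ y : BobMux m n f, y.1.1 = g ∧ P.bob.Cons (tr ++ w.path) y ∧
    P.bob.Signals y (tr ++ w.path) (w.2.map (!·))

variable {P tr}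

theorem not_witAccA_and_witAccB (hsol : P.Solves (MuxStrong f))
    (hphd : P.PartiallyHD muxGA muxGB) {D : ℕ} (g : BFunc n) (w : Wit D) :
    ¬ (WitAccA P tr g w ∧ WitAccB P tr g w) := by
  rintro ⟨⟨x, rfl, hxc, hxs⟩, ⟨y, hy, hyc, hys⟩⟩
  obtain ⟨k, rfl⟩ := Nat.exists_eq_add_of_le (P.fullA.length_le_of_cons hxc)
  rcases w with ⟨γ, _ | c⟩
  · -- both players sit at the leaf `⊥`, which is a wrong output since `gA = gB`
    obtain ⟨o, ho, -, hR⟩ := hsol x y (listAdv (tr ++ Wit.path (γ, none)))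
    simp only [Signals, Option.map_none] at hxs hys
    rw [hdRun_listAdv hxc hyc, hxs, hys, hdRun_leaf, HDTree.leaf.injEq] at ho
    subst ho
    exact hR hy.symm
  · -- both players send, which is not a classical round
    exact ((hphd x y _ hy.symm).of_listAdv hxc hyc).not_both_send (P.fullA.follow) hxs hys

theorem exists_witAcc (hsol : P.Solves (MuxStrong f)) {D : ℕ} (hD : d = tr.length + D)
    {x : AliceMux m n f} {y : BobMux m n f} (hxc : P.alice.Cons tr x) (hyc : P.bob.Cons tr y)
    (hkey : ∀ i, x.1.1 (x.1.2 i) ≠ y.1.1 (y.1.2 i) → x.1.2 i = y.1.2 i) :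
    ∃ w : Wit D, WitAccA P tr x.1.1 w ∧ WitAccB P tr y.1.1 w := by
  subst hD
  rcases hdRun_false_dichotomy D (x := x) (y := y) P.fullA.follow P.fullB.follow with
    ⟨γ, hlen, hγA, hγB, hrun⟩ | ⟨γ, c, hlen, hγA, hγB, hcA, hcB⟩
  · obtain ⟨o, hoA, hoB, hR⟩ := hsol x y (listAdv tr)
    rw [hdRun_listAdv hxc hyc, hrun] at hoA hoB
    obtain rfl := MuxStrong.eq_none hkey hR
    refine ⟨(⟨⟨γ.length, by omega⟩, ⟨γ, rfl⟩⟩, none), ⟨x, rfl, ?_, ?_⟩, ⟨y, rfl, ?_, ?_⟩⟩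
    · exact (cons_append _ x tr γ).2 ⟨hxc, hγA⟩
    · simpa [Signals, Wit.path, follow_append] using hoA
    · exact (cons_append _ y tr γ).2 ⟨hyc, hγB⟩
    · simpa [Signals, Wit.path, follow_append] using hoB
  · refine ⟨(⟨⟨γ.length, by omega⟩, ⟨γ, rfl⟩⟩, some c), ⟨x, rfl, ?_, ?_⟩, ⟨y, rfl, ?_, ?_⟩⟩
    · exact (cons_append _ x tr γ).2 ⟨hxc, hγA⟩
    · simpa [Signals, Wit.path, follow_append] using hcA
    · exact (cons_append _ y tr γ).2 ⟨hyc, hγB⟩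
    · simpa [Signals, Wit.path, follow_append] using hcB

theorem exists_witAcc_of_weakIntersect (hsol : P.Solves (MuxStrong f)) {D : ℕ}
    (hD : d = tr.length + D) {gA gB : BFunc n} (h : WeakIntersectHD P tr gA gB) :
    ∃ w : Wit D, WitAccA P tr gA w ∧ WitAccB P tr gB w := by
  obtain ⟨X, ⟨hX, hxc⟩, Y, ⟨hY, hyc⟩, hkey⟩ := h
  exact exists_witAcc (x := ⟨(gA, X), hX⟩) (y := ⟨(gB, Y), hY⟩) hsol hD hxc hyc hkey

theorem colorable_charGraphStrongHD (hsol : P.Solves (MuxStrong f))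
    (hphd : P.PartiallyHD muxGA muxGB) {D : ℕ} (hD : d = tr.length + D) (V : Set (BFunc n)) :
    (charGraphStrongHD P tr V).Colorable (2 ^ 2 ^ (D + 4)) := by
  refine (SimpleGraph.colorable_of_witnesses (charGraphStrongHD P tr V)
    (fun g (w : Wit D) => WitAccA P tr g w) (fun g w => WitAccB P tr g w) ?_
    (fun g w => not_witAccA_and_witAccB hsol hphd g w)).mono
    (Nat.pow_le_pow_right two_pos (two_mul_card_wit_le D))
  rintro u v ⟨-, huv | hvu⟩
  · obtain ⟨w, hw⟩ := exists_witAcc_of_weakIntersect hsol hD huv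
    exact ⟨w, .inl hw⟩
  · obtain ⟨w, hw⟩ := exists_witAcc_of_weakIntersect hsol hD hvu
    exact ⟨w, .inr hw⟩

end Witnesses

theorem logb_logb_sub_logb_logb_logb_le {χ : ℝ} {e : ℕ} (h4 : 4 ≤ χ) (hχ : χ ≤ 2 ^ 2 ^ e) :
    Real.logb 2 (Real.logb 2 χ) - Real.logb 2 (Real.logb 2 (Real.logb 2 χ)) ≤ e := by
  have hlog : 2 ≤ Real.logb 2 χ :=
    (Real.le_logb_iff_rpow_le one_lt_two (by linarith)).2 (by norm_num; linarith)
  have hlog' : Real.logb 2 χ ≤ 2 ^ e :=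
    (Real.logb_le_iff_le_rpow one_lt_two (by linarith)).2 (by exact_mod_cast hχ)
  have hloglog : 1 ≤ Real.logb 2 (Real.logb 2 χ) :=
    (Real.le_logb_iff_rpow_le one_lt_two (by linarith)).2 (by simpa using hlog)
  have hloglog' : Real.logb 2 (Real.logb 2 χ) ≤ e :=
    (Real.logb_le_iff_le_rpow one_lt_two (by linarith)).2 (by exact_mod_cast hlog')
  have := Real.logb_nonneg one_lt_two hloglog
  linarith

theorem statement5_general (m n : ℕ) (f : BFunc m) (d : ℕ)
    (P : HDProt (AliceMux m n f) (BobMux m n f) (Option (Fin m × Fin n)) d)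
    (hsol : P.Solves (MuxStrong f)) (hphd : P.PartiallyHD muxGA muxGB)
    (tr : List Bool) (htr : P.IsTranscript tr)
    (hchi : (4 : ℕ∞) ≤ (charGraphStrongHD P tr (VpiHD P tr)).chromaticNumber) :
    (tr.length : ℝ) +
        Real.logb 2 (Real.logb 2
          (((charGraphStrongHD P tr (VpiHD P tr)).chromaticNumber.toNat : ℝ))) -
        Real.logb 2 (Real.logb 2 (Real.logb 2
          (((charGraphStrongHD P tr (VpiHD P tr)).chromaticNumber.toNat : ℝ)))) - 4 ≤
      (d : ℝ) := by
  obtain ⟨⟨x, hx⟩, -⟩ := htr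
  obtain ⟨D, hD⟩ := Nat.exists_eq_add_of_le (P.fullA.length_le_of_cons hx)
  set G := charGraphStrongHD P tr (VpiHD P tr)
  have hcol : G.Colorable (2 ^ 2 ^ (D + 4)) := colorable_charGraphStrongHD hsol hphd hD _
  have hupper : G.chromaticNumber.toNat ≤ 2 ^ 2 ^ (D + 4) :=
    ENat.toNat_le_of_le_natCast hcol.chromaticNumber_le
  have hlower : 4 ≤ G.chromaticNumber.toNat := by
    simpa using ENat.toNat_le_toNat hchi (G.chromaticNumber_ne_top_iff_exists.2 ⟨_, hcol⟩)
  have := logb_logb_sub_logb_logb_logb_le (χ := G.chromaticNumber.toNat)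
    (by exact_mod_cast hlower) (by exact_mod_cast hupper)
  have hDR : (d : ℝ) = tr.length + D := by exact_mod_cast hD
  push_cast at this
  linarith

theorem statement5 (m n : ℕ) (f : BFunc m) (hf : NonConst f) (d : ℕ)
    (P : HDProt (AliceMux m n f) (BobMux m n f) (Option (Fin m × Fin n)) d)
    (hsol : P.Solves (MuxStrong f)) (hphd : P.PartiallyHD muxGA muxGB)
    (tr : List Bool) (htr : P.IsTranscript tr) (hV : (VpiHD P tr).Nonempty)
    (hchi : (4 : ℕ∞) ≤ (charGraphStrongHD P tr (VpiHD P tr)).chromaticNumber) :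
    (tr.length : ℝ) +
        Real.logb 2 (Real.logb 2
          (((charGraphStrongHD P tr (VpiHD P tr)).chromaticNumber.toNat : ℝ))) -
        Real.logb 2 (Real.logb 2 (Real.logb 2
          (((charGraphStrongHD P tr (VpiHD P tr)).chromaticNumber.toNat : ℝ)))) - 4 ≤
      (d : ℝ) :=
  statement5_general m n f d P hsol hphd tr htr hchi
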